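/- arXiv:1901.08200 — 5 statements merged into one kernel-verified Lean document; each statement's English description precedes it below -/
import Mathlib

section
/- Fix a set S of L objects, each hashed by two independent uniformly random hash functions into a set of m cache nodes per layer. Then the probability that the neighborhood Γ(S) of S (the union of the 2L hash images) has size strictly less than L is at most (2eL/m)^L. -/
/-!
If `|Γ(S)| < L ≤ 2m`, then `Γ(S)`, as a set of nodes of the two layers, lies in some set `U` of
exactly `L` nodes, and both hash functions take values in `U`. A union bound over `U` leaves at
most `C(2m, L) · L^(2L)` bad pairs, and `C(2m, L) · L^L ≤ (2em)^L` because `L^L / L! ≤ e^L`;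
dividing by `m^(2L)` gives `(2eL/m)^L`. If `L > 2m` the bound exceeds `1`.
-/

open Finset

section FunctionsWithSmallImage

variable {α β : Type*} [Fintype α] [DecidableEq α] [Fintype β] [DecidableEq β]

lemma card_filter_image_univ_subset (U : Finset β) :
    #{f : α → β | image f univ ⊆ U} = #U ^ Fintype.card α := by
  have : ({f : α → β | image f univ ⊆ U} : Finset _) = Fintype.piFinset fun _ ↦ U := by
    ext f
    simp [image_subset_iff]
  rw [this, Fintype.card_piFinset, prod_const, card_univ]

lemma card_filter_card_image_le {k : ℕ} (hk : k ≤ Fintype.card β) :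
    #{f : α → β | #(image f univ) ≤ k} ≤ (Fintype.card β).choose k * k ^ Fintype.card α := by
  have hcover : ({f : α → β | #(image f univ) ≤ k} : Finset _) ⊆
      (powersetCard k univ).biUnion fun U ↦ {f : α → β | image f univ ⊆ U} := by
    intro f hf
    obtain ⟨U, hfU, -, hU⟩ :=
      exists_subsuperset_card_eq (subset_univ (image f univ)) (mem_filter.1 hf).2
        (by rwa [card_univ])
    simpa using ⟨U, hU, hfU⟩
  calc _ ≤ _ := card_le_card hcover
    _ ≤ ∑ U ∈ powersetCard k univ, #{f : α → β | image f univ ⊆ U} := card_biUnion_le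
    _ = _ := by
      rw [sum_congr rfl fun U hU ↦ by
          rw [card_filter_image_univ_subset, (mem_powersetCard.1 hU).2],
        sum_const, card_powersetCard, card_univ, smul_eq_mul]

end FunctionsWithSmallImage

lemma image_sumMap_univ {α β γ δ : Type*} [Fintype α] [Fintype β] [DecidableEq γ]
    [DecidableEq δ] (f : α → γ) (g : β → δ) :
    image (Sum.map f g) univ = (image f univ).disjSum (image g univ) := by
  ext (x | x) <;> simp

lemma card_filter_card_image_add_card_image_le {α β γ δ : Type*} [Fintype α] [DecidableEq α]
    [Fintype β] [DecidableEq β] [Fintype γ] [DecidableEq γ] [Fintype δ] [DecidableEq δ] {k : ℕ}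
    (hk : k ≤ Fintype.card γ + Fintype.card δ) :
    #{q : (α → γ) × (β → δ) | #(image q.1 univ) + #(image q.2 univ) ≤ k} ≤
      (Fintype.card γ + Fintype.card δ).choose k * k ^ (Fintype.card α + Fintype.card β) := by
  have hinj : Set.InjOn (fun q : (α → γ) × (β → δ) ↦ Sum.map q.1 q.2)
      {q | #(image q.1 univ) + #(image q.2 univ) ≤ k} := fun q _ q' _ h ↦
    Prod.ext (funext fun a ↦ Sum.inl_injective (congrFun h (.inl a)))
      (funext fun b ↦ Sum.inr_injective (congrFun h (.inr b)))
  calc _ ≤ #{f : α ⊕ β → γ ⊕ δ | #(image f univ) ≤ k} := by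
        refine card_le_card_of_injOn _ (fun q hq ↦ ?_) (by simpa using hinj)
        simpa [image_sumMap_univ, card_disjSum] using hq
    _ ≤ _ := by
        simpa only [Fintype.card_sum] using
          card_filter_card_image_le (α := α ⊕ β) (β := γ ⊕ δ) (by rwa [Fintype.card_sum])

open Real in
lemma choose_mul_pow_le_exp_mul_pow (n k : ℕ) :
    (n.choose k : ℝ) * k ^ k ≤ (exp 1 * n) ^ k := by
  have hk : (k : ℝ) ^ k / k.factorial ≤ exp 1 ^ k := by
    rw [← exp_nat_mul, mul_one]
    exact pow_div_factorial_le_exp k k.cast_nonneg k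
  calc (n.choose k : ℝ) * k ^ k ≤ n ^ k / k.factorial * k ^ k := by
        gcongr
        exact Nat.choose_le_pow_div k n
    _ = n ^ k * (k ^ k / k.factorial) := by ring
    _ ≤ n ^ k * exp 1 ^ k := by gcongr
    _ = (exp 1 * n) ^ k := by ring

open Real in
/-- Fix a set of `L` objects, each hashed by two independent uniformly random hash
functions into `m` cache nodes per layer (the two layers are disjoint, so
`|Γ(S)| = |im h₀| + |im h₁|`). The probability that `|Γ(S)| < L` is at most
`(2eL/m)^L`. Probability is modeled as a uniform count over all pairs of hash
functions. -/
theorem neighborhood_small_prob_le (m L : ℕ) (hm : 0 < m) :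
    ((univ.filter (fun q : (Fin L → Fin m) × (Fin L → Fin m) =>
        (image q.1 univ).card + (image q.2 univ).card < L)).card : ℝ)
      / ((m : ℝ) ^ (2 * L)) ≤
      (2 * Real.exp 1 * L / m) ^ L := by
  set bad := univ.filter fun q : (Fin L → Fin m) × (Fin L → Fin m) ↦
    #(image q.1 univ) + #(image q.2 univ) < L
  have hrhs : (2 * exp 1 * L / m) ^ L * (m : ℝ) ^ (2 * L) =
      (exp 1 * (2 * m : ℕ)) ^ L * L ^ L := by
    have : (m : ℝ) ≠ 0 := by exact_mod_cast hm.ne'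
    rw [div_pow, pow_mul]; push_cast; field_simp; ring
  rw [div_le_iff₀ (by positivity), hrhs]
  rcases le_or_gt L (2 * m) with hLm | hLm
  · have hcount : #bad ≤ (2 * m).choose L * L ^ (2 * L) := by
      refine (card_le_card (monotone_filter_right _ fun _ _ ↦ le_of_lt)).trans ?_
      simpa [two_mul] using card_filter_card_image_add_card_image_le (α := Fin L) (β := Fin L)
        (γ := Fin m) (δ := Fin m) (by simpa [two_mul] using hLm)
    calc (#bad : ℝ) ≤ ((2 * m).choose L : ℝ) * L ^ L * L ^ L := by
          rw [mul_assoc, ← pow_add, ← two_mul]; exact_mod_cast hcount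
      _ ≤ _ := by gcongr; exact choose_mul_pow_le_exp_mul_pow _ _
  · have hmL : (m : ℝ) ≤ L := by exact_mod_cast (by omega : m ≤ L)
    have hm2 : (m : ℝ) ≤ exp 1 * (2 * m : ℕ) := by
      push_cast
      nlinarith [add_one_le_exp 1, (Nat.cast_nonneg m : (0 : ℝ) ≤ m)]
    calc (#bad : ℝ) ≤ (m ^ (2 * L) : ℕ) := by
          exact_mod_cast (card_filter_le _ _).trans (by simp [pow_mul', sq])
      _ = ((m : ℝ) * m) ^ L := by push_cast; ring
      _ ≤ (exp 1 * (2 * m : ℕ) * L) ^ L := by gcongr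
      _ = _ := mul_pow _ _ _
end

section
/- Let k = αm objects be hashed into 2m cache nodes (m per layer) by two independent uniform hash functions. If α is a sufficiently small positive constant, then the probability that some subset S ⊆ U of size at least m^{0.1} satisfies |Γ(S)| < |S| is at most 1/m^{10} for all sufficiently large m. -/
/-!
If `|h₁(S)| + |h₂(S)| < s = |S|`, then `Γ(S)`, viewed inside the disjoint union of the two
layers, lies in some set `T` of `s - 1` nodes. For fixed `S` and `T` at most a
`(s/m)^{2s}` fraction of the hash pairs map `S` into `T`, and there are `C(2m, s - 1)` choices
of `T`. Together with `C(k, s)` choices of `S` and `s^s ≤ e^s s!`, the sets of size `s`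
contribute at most `(2e²α)^s ≤ 2^{-s}` once `α ≤ 1/(4e²)`. Summing over `s ≥ m^{0.1}` gives
`2m · 2^{-m^{0.1}}`, which decays faster than any power of `m`.
-/

open Finset Filter Topology Real
open scoped Nat

theorem le_of_four_mul_exp_one_sq_mul_le {k n : ℕ} (h : 4 * exp 1 ^ 2 * k ≤ n) : k ≤ n := by
  have : (k : ℝ) ≤ 4 * exp 1 ^ 2 * k :=
    le_mul_of_one_le_left (Nat.cast_nonneg k) (by nlinarith [add_one_le_exp (1 : ℝ)])
  exact_mod_cast this.trans h

theorem pow_self_le_exp_one_pow_mul_factorial (j : ℕ) : (j : ℝ) ^ j ≤ exp 1 ^ j * j ! := by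
  have h := pow_div_factorial_le_exp (x := j) (Nat.cast_nonneg j) j
  rwa [div_le_iff₀ (by positivity), ← exp_one_pow] at h

theorem choose_mul_choose_pred_mul_pow_le {k N j : ℕ} (hj : 1 ≤ j) (hjN : j ≤ N) :
    (k.choose j * N.choose (j - 1) * (j : ℝ) ^ (2 * j)) ≤ (exp 1 ^ 2 * k * N) ^ j := by
  obtain ⟨i, rfl⟩ : ∃ i, j = i + 1 := ⟨j - 1, by omega⟩
  have hN : ((i + 1 : ℕ) : ℝ) ≤ N := by exact_mod_cast hjN
  have hi : (i + 1 : ℕ)! = (i + 1) * i ! := Nat.factorial_succ i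
  calc (k.choose (i + 1) * N.choose (i + 1 - 1) * ((i + 1 : ℕ) : ℝ) ^ (2 * (i + 1)))
      ≤ (k ^ (i + 1) / (i + 1 : ℕ)!) * (N ^ i / i !)
          * (exp 1 ^ (i + 1) * (i + 1 : ℕ)!) ^ 2 := by
        rw [Nat.add_sub_cancel, pow_mul']
        gcongr
        · exact Nat.choose_le_pow_div (α := ℝ) _ _
        · exact Nat.choose_le_pow_div (α := ℝ) _ _
        · exact pow_self_le_exp_one_pow_mul_factorial _
    _ = (exp 1 ^ 2 * k) ^ (i + 1) * N ^ i * ((i + 1 : ℕ) : ℝ) := by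
        rw [hi]; push_cast; field_simp; ring
    _ ≤ (exp 1 ^ 2 * k) ^ (i + 1) * N ^ i * N := by gcongr
    _ = (exp 1 ^ 2 * k * N) ^ (i + 1) := by ring

theorem choose_mul_choose_pred_mul_sq_le_half_pow {k n j : ℕ}
    (hkn : 4 * exp 1 ^ 2 * k ≤ n) (hj : 0 < j) (hjk : j ≤ k) :
    (k.choose j * ((2 * n).choose (j - 1) * ((j : ℝ) ^ j * n ^ (k - j)) ^ 2))
      ≤ (1 / 2 : ℝ) ^ j * n ^ (2 * k) := by
  have hjn : j ≤ 2 * n := by have := le_of_four_mul_exp_one_sq_mul_le hkn; omega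
  have hn : (2 : ℝ) * exp 1 ^ 2 * k * n ≤ n ^ 2 / 2 := by
    nlinarith [Nat.cast_nonneg (α := ℝ) n]
  calc (k.choose j * ((2 * n).choose (j - 1) * ((j : ℝ) ^ j * n ^ (k - j)) ^ 2))
      = (k.choose j * (2 * n).choose (j - 1) * (j : ℝ) ^ (2 * j)) * (n ^ 2) ^ (k - j) := by
        ring
    _ ≤ (exp 1 ^ 2 * k * ((2 * n : ℕ) : ℝ)) ^ j * (n ^ 2) ^ (k - j) := by
        gcongr
        exact choose_mul_choose_pred_mul_pow_le hj hjn
    _ ≤ (n ^ 2 / 2 : ℝ) ^ j * (n ^ 2) ^ (k - j) := by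
        gcongr
        push_cast
        linarith
    _ = (1 / 2 : ℝ) ^ j * n ^ (2 * k) := by
        rw [div_eq_mul_one_div, mul_pow, mul_comm, ← mul_assoc, ← pow_add,
          Nat.sub_add_cancel hjk, ← pow_mul]
        ring

section Counting

variable {α β : Type*} [Fintype α] [Fintype β] [DecidableEq α] [DecidableEq β]

theorem card_filter_forall_mem_eq (S : Finset α) (T : Finset β) :
    #{f : α → β | ∀ x ∈ S, f x ∈ T} = #T ^ #S * Fintype.card β ^ (Fintype.card α - #S) := by
  have hpi : ({f : α → β | ∀ x ∈ S, f x ∈ T} : Finset (α → β))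
      = Fintype.piFinset fun x => if x ∈ S then T else univ := by
    ext f
    simp only [mem_filter, mem_univ, true_and, Fintype.mem_piFinset]
    exact ⟨fun h x => by split_ifs with hx <;> simp [h x, hx],
      fun h x hx => by simpa [hx] using h x⟩
  rw [hpi, Fintype.card_piFinset]
  simp only [apply_ite card, card_univ]
  rw [prod_ite, prod_const, prod_const]
  simp [filter_not, card_sdiff]

theorem card_filter_subset_toLeft_and_subset_toRight_le (S : Finset α) (T : Finset (β ⊕ β)) :
    #{q : (α → β) × (α → β) | S.image q.1 ⊆ T.toLeft ∧ S.image q.2 ⊆ T.toRight}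
      ≤ (#T ^ #S * Fintype.card β ^ (Fintype.card α - #S)) ^ 2 := by
  have hprod : univ.filter (fun q : (α → β) × (α → β) =>
        S.image q.1 ⊆ T.toLeft ∧ S.image q.2 ⊆ T.toRight)
      = ({f : α → β | ∀ x ∈ S, f x ∈ T.toLeft} : Finset (α → β))
          ×ˢ ({f : α → β | ∀ x ∈ S, f x ∈ T.toRight} : Finset (α → β)) := by
    ext q
    simp [image_subset_iff]
  rw [hprod, card_product, card_filter_forall_mem_eq, card_filter_forall_mem_eq, sq]
  gcongr
  · exact card_toLeft_le
  · exact card_toRight_le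

theorem filter_card_image_add_lt_subset_biUnion (S : Finset α)
    (hS : #S ≤ 2 * Fintype.card β + 1) :
    ({q : (α → β) × (α → β) | #(S.image q.1) + #(S.image q.2) < #S} : Finset _)
      ⊆ (powersetCard (#S - 1) (univ : Finset (β ⊕ β))).biUnion fun T =>
          univ.filter fun q : (α → β) × (α → β) =>
            S.image q.1 ⊆ T.toLeft ∧ S.image q.2 ⊆ T.toRight := by
  intro q hq
  rw [mem_filter] at hq
  obtain ⟨T, hΓT, hT⟩ := exists_superset_card_eq
    (s := (S.image q.1).disjSum (S.image q.2)) (n := #S - 1)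
    (by rw [card_disjSum]; omega) (by simp; omega)
  rw [disjSum_subset] at hΓT
  simp only [mem_biUnion, mem_powersetCard, mem_filter, mem_univ, true_and]
  exact ⟨T, ⟨subset_univ T, hT⟩, hΓT⟩

theorem card_filter_card_image_add_lt_le (S : Finset α) (hS : #S ≤ 2 * Fintype.card β + 1) :
    #{q : (α → β) × (α → β) | #(S.image q.1) + #(S.image q.2) < #S}
      ≤ (2 * Fintype.card β).choose (#S - 1)
        * (#S ^ #S * Fintype.card β ^ (Fintype.card α - #S)) ^ 2 := by
  calc _ ≤ ∑ T ∈ powersetCard (#S - 1) (univ : Finset (β ⊕ β)),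
        #{q : (α → β) × (α → β) | S.image q.1 ⊆ T.toLeft ∧ S.image q.2 ⊆ T.toRight} :=
        (card_le_card (filter_card_image_add_lt_subset_biUnion S hS)).trans card_biUnion_le
    _ ≤ ∑ T ∈ powersetCard (#S - 1) (univ : Finset (β ⊕ β)),
        (#S ^ #S * Fintype.card β ^ (Fintype.card α - #S)) ^ 2 := by
      refine sum_le_sum fun T hT => ?_
      refine (card_filter_subset_toLeft_and_subset_toRight_le S T).trans ?_
      have : #T ≤ #S := (mem_powersetCard.1 hT).2.trans_le (Nat.sub_le _ _)
      gcongr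
    _ = _ := by simp [two_mul]

theorem card_filter_exists_card_image_add_lt_le (p : ℕ → Prop) [DecidablePred p]
    (hαβ : Fintype.card α ≤ 2 * Fintype.card β + 1) :
    #{q : (α → β) × (α → β) | ∃ S : Finset α, p #S ∧ #(S.image q.1) + #(S.image q.2) < #S}
      ≤ ∑ j ∈ range (Fintype.card α + 1) with p j, (Fintype.card α).choose j
          * ((2 * Fintype.card β).choose (j - 1)
            * (j ^ j * Fintype.card β ^ (Fintype.card α - j)) ^ 2) := by
  set bound : ℕ → ℕ := fun j => (2 * Fintype.card β).choose (j - 1)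
    * (j ^ j * Fintype.card β ^ (Fintype.card α - j)) ^ 2
  calc _ ≤ ∑ S : Finset α with p #S,
        #{q : (α → β) × (α → β) | #(S.image q.1) + #(S.image q.2) < #S} := by
        refine (card_le_card fun q hq => ?_).trans card_biUnion_le
        obtain ⟨S, hpS, hS⟩ := (mem_filter.1 hq).2
        exact mem_biUnion.2 ⟨S, by simpa using hpS, by simpa using hS⟩
    _ ≤ ∑ S : Finset α with p #S, bound #S :=
        sum_le_sum fun S _ => card_filter_card_image_add_lt_le S
          ((card_le_univ S).trans hαβ)
    _ = ∑ S ∈ (univ : Finset α).powerset, if p #S then bound #S else 0 := by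
        rw [powerset_univ, sum_filter]
    _ = _ := by
        rw [sum_powerset_apply_card (fun j => if p j then bound j else 0), card_univ,
          sum_filter]
        simp [bound, mul_ite]

theorem card_filter_exists_card_image_add_lt_le_half_rpow {y : ℝ} (hy : 0 < y)
    (hαβ : 4 * exp 1 ^ 2 * Fintype.card α ≤ Fintype.card β) :
    (#{q : (α → β) × (α → β) | ∃ S : Finset α, y ≤ #S ∧ #(S.image q.1) + #(S.image q.2) < #S}
      : ℝ) ≤ (Fintype.card α + 1) * (1 / 2) ^ y * Fintype.card β ^ (2 * Fintype.card α) := by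
  set k := Fintype.card α
  set n := Fintype.card β
  have hkn : k ≤ n := le_of_four_mul_exp_one_sq_mul_le hαβ
  have hterm : ∀ j ∈ (range (k + 1)).filter (fun j : ℕ => y ≤ j),
      (k.choose j * ((2 * n).choose (j - 1) * ((j : ℝ) ^ j * n ^ (k - j)) ^ 2))
        ≤ (1 / 2 : ℝ) ^ y * n ^ (2 * k) := by
    intro j hj
    obtain ⟨hjr, hyj⟩ := mem_filter.1 hj
    calc _ ≤ (1 / 2 : ℝ) ^ j * n ^ (2 * k) :=
          choose_mul_choose_pred_mul_sq_le_half_pow hαβ (by exact_mod_cast hy.trans_le hyj)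
            (Nat.lt_succ_iff.1 (mem_range.1 hjr))
      _ ≤ (1 / 2 : ℝ) ^ y * n ^ (2 * k) := by
          rw [← rpow_natCast]
          exact mul_le_mul_of_nonneg_right
            (rpow_le_rpow_of_exponent_ge (by norm_num) (by norm_num) hyj) (by positivity)
  calc _ ≤ ((∑ j ∈ (range (k + 1)).filter (fun j : ℕ => y ≤ j), k.choose j
          * ((2 * n).choose (j - 1) * (j ^ j * n ^ (k - j)) ^ 2) : ℕ) : ℝ) := by
        exact_mod_cast card_filter_exists_card_image_add_lt_le (α := α) (β := β) (fun j => y ≤ j)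
          (by omega)
    _ ≤ ∑ j ∈ (range (k + 1)).filter (fun j : ℕ => y ≤ j), (1 / 2 : ℝ) ^ y * n ^ (2 * k) := by
        push_cast
        exact sum_le_sum hterm
    _ ≤ (k + 1) * ((1 / 2 : ℝ) ^ y * n ^ (2 * k)) := by
        rw [sum_const, nsmul_eq_mul]
        gcongr
        exact_mod_cast (card_filter_le _ _).trans (card_range _).le
    _ = _ := by ring

end Counting

theorem tendsto_rpow_mul_rpow_rpow_atTop_nhds_zero (s : ℝ) {t b : ℝ} (ht : 0 < t) (hb₀ : 0 < b)
    (hb₁ : b < 1) : Tendsto (fun x : ℝ => x ^ s * b ^ x ^ t) atTop (𝓝 0) := by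
  have hdecay := (tendsto_rpow_mul_exp_neg_mul_atTop_nhds_zero (s / t) (-log b)
    (neg_pos.2 (log_neg hb₀ hb₁))).comp (tendsto_rpow_atTop ht)
  refine hdecay.congr' ((eventually_ge_atTop 0).mono fun x hx => ?_)
  simp only [Function.comp_apply, neg_neg]
  rw [← rpow_mul hx, mul_div_cancel₀ s ht.ne', rpow_def_of_pos hb₀]

theorem eventually_two_mul_half_rpow_le :
    ∀ᶠ m : ℕ in atTop, 2 * m * (1 / 2 : ℝ) ^ (m : ℝ) ^ (0.1 : ℝ) ≤ 1 / (m : ℝ) ^ 10 := by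
  have hsmall := ((tendsto_rpow_mul_rpow_rpow_atTop_nhds_zero 11 (by norm_num : (0 : ℝ) < 0.1)
    (by norm_num : (0 : ℝ) < 1 / 2) (by norm_num)).comp tendsto_natCast_atTop_atTop).eventually
    (ge_mem_nhds (by norm_num : (0 : ℝ) < 1 / 2))
  filter_upwards [hsmall, eventually_ge_atTop 1] with m hm hm₁
  have hm₀ : (0 : ℝ) < m := by exact_mod_cast hm₁
  simp only [Function.comp_apply, show (11 : ℝ) = (11 : ℕ) by norm_num, rpow_natCast] at hm
  rw [le_div_iff₀ (by positivity)]
  linarith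

/-- Let `k = αm` objects be hashed into two layers of `m` cache nodes each by two
independent uniform hash functions. For a sufficiently small positive constant `α` and
all sufficiently large `m`, the probability that some subset `S` of objects of size at
least `m^0.1` satisfies `|Γ(S)| < |S|` is at most `1 / m^10`. -/
theorem large_sets_expansion_fails_rarely :
    ∃ α₀ : ℝ, 0 < α₀ ∧ ∀ α : ℝ, 0 < α → α ≤ α₀ →
      ∃ M : ℕ, ∀ m : ℕ, M ≤ m → ∀ k : ℕ, (k : ℝ) = α * m →
        ((univ.filter (fun q : (Fin k → Fin m) × (Fin k → Fin m) =>
            ∃ S : Finset (Fin k), (m : ℝ) ^ (0.1 : ℝ) ≤ (S.card : ℝ) ∧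
              (S.image q.1).card + (S.image q.2).card < S.card)).card : ℝ)
          / ((m : ℝ) ^ (2 * k)) ≤ 1 / (m : ℝ) ^ 10 := by
  refine ⟨1 / (4 * exp 1 ^ 2), by positivity, fun α _ hα₀ => ?_⟩
  obtain ⟨M, hM⟩ := eventually_atTop.1
    (eventually_two_mul_half_rpow_le.and (eventually_ge_atTop 1))
  refine ⟨M, fun m hmM k hk => ?_⟩
  obtain ⟨htail, hm⟩ := hM m hmM
  have hm₀ : (0 : ℝ) < m := by exact_mod_cast hm
  have hkm : 4 * exp 1 ^ 2 * k ≤ m := by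
    rw [hk, ← mul_assoc]
    refine mul_le_of_le_one_left hm₀.le ?_
    rwa [le_div_iff₀' (by positivity)] at hα₀
  have hk₁ : (k : ℝ) + 1 ≤ 2 * m := by
    have := le_of_four_mul_exp_one_sq_mul_le hkm
    exact_mod_cast (by omega : k + 1 ≤ 2 * m)
  have hbound := card_filter_exists_card_image_add_lt_le_half_rpow (α := Fin k) (β := Fin m)
    (rpow_pos_of_pos hm₀ 0.1) (by simpa using hkm)
  simp only [Fintype.card_fin] at hbound
  rw [div_le_iff₀ (by positivity)]
  refine hbound.trans ?_
  calc (k + 1) * (1 / 2 : ℝ) ^ (m : ℝ) ^ (0.1 : ℝ) * m ^ (2 * k)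
    _ ≤ 2 * m * (1 / 2 : ℝ) ^ (m : ℝ) ^ (0.1 : ℝ) * m ^ (2 * k) := by gcongr
    _ ≤ 1 / m ^ 10 * m ^ (2 * k) := by gcongr
end

section
/- For suitably small constant α > 0: if k = αm objects are hashed into two groups of m cache nodes each by two independent uniformly random hash functions, then with probability 1 − o(1) (as m → ∞) the resulting bipartite graph G satisfies |Γ(S)| ≥ |S| for every subset S of objects. -/
open Finset
open scoped Classical

namespace ExpansionAux

variable {k m : ℕ}

lemma card_filter_maps (S : Finset (Fin k)) (T : Finset (Fin m)) :
    (univ.filter fun f : Fin k → Fin m => ∀ i ∈ S, f i ∈ T).card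
      = T.card ^ S.card * m ^ (k - S.card) := by
  have h : (univ.filter fun f : Fin k → Fin m => ∀ i ∈ S, f i ∈ T)
      = Fintype.piFinset (fun i => if i ∈ S then T else univ) := by
    ext f
    simp only [mem_filter, mem_univ, true_and, Fintype.mem_piFinset]
    constructor
    · intro h i; by_cases hi : i ∈ S <;> simp [hi, h i]
    · intro h i hi; have := h i; simpa [hi] using this
  rw [h, Fintype.card_piFinset]
  have h2 : ∀ i ∈ (univ : Finset (Fin k)),
      (if i ∈ S then T else univ).card = if i ∈ S then T.card else m := by
    intro i _; by_cases hi : i ∈ S <;> simp [hi]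
  rw [Finset.prod_congr rfl h2, Finset.prod_ite, Finset.prod_const, Finset.prod_const]
  have h3 : univ.filter (fun i => i ∈ S) = S := by ext i; simp
  have h4 : (univ.filter (fun i => ¬ i ∈ S)).card = k - S.card := by
    rw [Finset.filter_not, Finset.card_sdiff_of_subset (by rw [h3]; exact subset_univ S), h3,
      card_univ, Fintype.card_fin]
  rw [h3, h4]

lemma card_filter_image_le (S : Finset (Fin k)) {t : ℕ} (ht : t ≤ m) :
    (univ.filter fun f : Fin k → Fin m => (S.image f).card ≤ t).card
      ≤ m.choose t * (t ^ S.card * m ^ (k - S.card)) := by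
  have hsub : (univ.filter fun f : Fin k → Fin m => (S.image f).card ≤ t)
      ⊆ ((univ : Finset (Fin m)).powersetCard t).biUnion
          (fun T => univ.filter fun f => ∀ i ∈ S, f i ∈ T) := by
    intro f hf
    simp only [mem_filter, mem_univ, true_and] at hf
    obtain ⟨T, hT1, hT2, hT3⟩ := Finset.exists_subsuperset_card_eq
      (Finset.subset_univ (S.image f)) hf (by simpa using ht)
    refine Finset.mem_biUnion.2 ⟨T, Finset.mem_powersetCard.2 ⟨hT2, hT3⟩, ?_⟩
    simp only [mem_filter, mem_univ, true_and]
    exact fun i hi => hT1 (Finset.mem_image_of_mem f hi)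
  have h1 := Finset.card_le_card hsub
  have h2 : (((univ : Finset (Fin m)).powersetCard t).biUnion
          (fun T => univ.filter fun f : Fin k → Fin m => ∀ i ∈ S, f i ∈ T)).card
      ≤ ∑ T ∈ (univ : Finset (Fin m)).powersetCard t,
          (univ.filter fun f : Fin k → Fin m => ∀ i ∈ S, f i ∈ T).card :=
    Finset.card_biUnion_le
  have h3 : (∑ T ∈ (univ : Finset (Fin m)).powersetCard t,
          (univ.filter fun f : Fin k → Fin m => ∀ i ∈ S, f i ∈ T).card)
      = m.choose t * (t ^ S.card * m ^ (k - S.card)) := by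
    rw [Finset.sum_congr rfl (fun T hT => by
      rw [card_filter_maps, (Finset.mem_powersetCard.1 hT).2])]
    rw [Finset.sum_const, Finset.card_powersetCard, card_univ, Fintype.card_fin, smul_eq_mul]
  exact h1.trans (h2.trans_eq h3)

lemma card_filter_prod (P Q : (Fin k → Fin m) → Prop) [DecidablePred P] [DecidablePred Q]
    [DecidablePred fun q : (Fin k → Fin m) × (Fin k → Fin m) => P q.1 ∧ Q q.2] :
    (univ.filter fun q : (Fin k → Fin m) × (Fin k → Fin m) => P q.1 ∧ Q q.2).card
      = (univ.filter P).card * (univ.filter Q).card := by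
  rw [← Finset.card_product]
  congr 1
  ext q
  simp only [mem_filter, mem_univ, true_and, Finset.mem_product]

def B (k m s : ℕ) : ℕ :=
  ∑ p ∈ Finset.HasAntidiagonal.antidiagonal (s - 1),
    (m.choose p.1 * (p.1 ^ s * m ^ (k - s))) * (m.choose p.2 * (p.2 ^ s * m ^ (k - s)))

lemma card_badS_le (hkm : k ≤ m) (S : Finset (Fin k)) :
    (univ.filter fun q : (Fin k → Fin m) × (Fin k → Fin m) =>
        (S.image q.1).card + (S.image q.2).card < S.card).card ≤ B k m S.card := by
  have hsub : (univ.filter fun q : (Fin k → Fin m) × (Fin k → Fin m) =>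
        (S.image q.1).card + (S.image q.2).card < S.card)
      ⊆ (Finset.HasAntidiagonal.antidiagonal (S.card - 1)).biUnion (fun p =>
          univ.filter fun q : (Fin k → Fin m) × (Fin k → Fin m) =>
            (S.image q.1).card ≤ p.1 ∧ (S.image q.2).card ≤ p.2) := by
    intro q hq
    simp only [mem_filter, mem_univ, true_and] at hq
    refine Finset.mem_biUnion.2 ⟨(S.card - 1 - (S.image q.2).card, (S.image q.2).card),
      Finset.HasAntidiagonal.mem_antidiagonal.2 (by omega), ?_⟩
    simp only [mem_filter, mem_univ, true_and]
    exact ⟨by omega, le_rfl⟩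
  have h1 := Finset.card_le_card hsub
  have h2 : ((Finset.HasAntidiagonal.antidiagonal (S.card - 1)).biUnion (fun p =>
          univ.filter fun q : (Fin k → Fin m) × (Fin k → Fin m) =>
            (S.image q.1).card ≤ p.1 ∧ (S.image q.2).card ≤ p.2)).card
      ≤ ∑ p ∈ Finset.HasAntidiagonal.antidiagonal (S.card - 1),
          (univ.filter fun q : (Fin k → Fin m) × (Fin k → Fin m) =>
            (S.image q.1).card ≤ p.1 ∧ (S.image q.2).card ≤ p.2).card :=
    Finset.card_biUnion_le
  refine h1.trans (h2.trans (Finset.sum_le_sum fun p hp => ?_))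
  have hp' := Finset.HasAntidiagonal.mem_antidiagonal.1 hp
  have hSk : S.card ≤ k := by
    simpa using Finset.card_le_card (Finset.subset_univ S)
  have hp1 : p.1 ≤ m := by omega
  have hp2 : p.2 ≤ m := by omega
  rw [card_filter_prod (fun f : Fin k → Fin m => (S.image f).card ≤ p.1)
    (fun f : Fin k → Fin m => (S.image f).card ≤ p.2)]
  exact Nat.mul_le_mul (card_filter_image_le S hp1) (card_filter_image_le S hp2)

lemma card_bad_le (hkm : k ≤ m) :
    (univ.filter fun q : (Fin k → Fin m) × (Fin k → Fin m) =>
        ¬ ∀ S : Finset (Fin k), S.card ≤ (S.image q.1).card + (S.image q.2).card).card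
      ≤ ∑ s ∈ Finset.Icc 1 k, k.choose s * B k m s := by
  have hsub : (univ.filter fun q : (Fin k → Fin m) × (Fin k → Fin m) =>
        ¬ ∀ S : Finset (Fin k), S.card ≤ (S.image q.1).card + (S.image q.2).card)
      ⊆ ((univ : Finset (Fin k)).powerset).biUnion (fun S =>
          univ.filter fun q : (Fin k → Fin m) × (Fin k → Fin m) =>
            (S.image q.1).card + (S.image q.2).card < S.card) := by
    intro q hq
    simp only [mem_filter, mem_univ, true_and, not_forall, not_le] at hq
    obtain ⟨S, hS⟩ := hq
    exact Finset.mem_biUnion.2 ⟨S, Finset.mem_powerset.2 (subset_univ S),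
      Finset.mem_filter.2 ⟨mem_univ q, hS⟩⟩
  have h1 := Finset.card_le_card hsub
  have h2 : (((univ : Finset (Fin k)).powerset).biUnion (fun S =>
          univ.filter fun q : (Fin k → Fin m) × (Fin k → Fin m) =>
            (S.image q.1).card + (S.image q.2).card < S.card)).card
      ≤ ∑ S ∈ (univ : Finset (Fin k)).powerset,
          (univ.filter fun q : (Fin k → Fin m) × (Fin k → Fin m) =>
            (S.image q.1).card + (S.image q.2).card < S.card).card :=
    Finset.card_biUnion_le
  have h3 : (∑ S ∈ (univ : Finset (Fin k)).powerset,
          (univ.filter fun q : (Fin k → Fin m) × (Fin k → Fin m) =>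
            (S.image q.1).card + (S.image q.2).card < S.card).card)
      = ∑ j ∈ Finset.range (k + 1), ∑ S ∈ Finset.powersetCard j (univ : Finset (Fin k)),
          (univ.filter fun q : (Fin k → Fin m) × (Fin k → Fin m) =>
            (S.image q.1).card + (S.image q.2).card < S.card).card := by
    rw [Finset.sum_powerset]
    rw [card_univ, Fintype.card_fin]
  have hrange : Finset.range (k + 1) = insert 0 (Finset.Icc 1 k) := by
    ext x; simp [Finset.mem_range, Finset.mem_Icc]; omega
  have h0 : ∀ S : Finset (Fin k), S ∈ Finset.powersetCard 0 (univ : Finset (Fin k)) →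
      (univ.filter fun q : (Fin k → Fin m) × (Fin k → Fin m) =>
        (S.image q.1).card + (S.image q.2).card < S.card).card = 0 := by
    intro S hS
    rw [Finset.powersetCard_zero, Finset.mem_singleton] at hS
    subst hS
    simp
  refine h1.trans (h2.trans (h3.trans_le ?_))
  rw [hrange, Finset.sum_insert (by simp)]
  rw [Finset.sum_eq_zero h0, zero_add]
  refine Finset.sum_le_sum fun j hj => ?_
  have : ∀ S ∈ Finset.powersetCard j (univ : Finset (Fin k)),
      (univ.filter fun q : (Fin k → Fin m) × (Fin k → Fin m) =>
        (S.image q.1).card + (S.image q.2).card < S.card).card ≤ B k m j := by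
    intro S hS
    have hcard := (Finset.mem_powersetCard.1 hS).2
    simpa [hcard] using card_badS_le hkm S
  refine (Finset.sum_le_sum this).trans ?_
  rw [Finset.sum_const, Finset.card_powersetCard, card_univ, Fintype.card_fin, smul_eq_mul]

lemma pow_div_factorial_le_exp (t : ℕ) :
    (t : ℝ) ^ t / t.factorial ≤ Real.exp 1 ^ t := by
  rw [Real.exp_one_pow]
  refine le_trans ?_ (Real.sum_le_exp_of_nonneg (by positivity) (t + 1))
  exact Finset.single_le_sum (f := fun i => (t : ℝ) ^ i / i.factorial)
    (fun i _ => by positivity) (Finset.mem_range.2 (Nat.lt_succ_self t))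

lemma choose_mul_pow_le (m t s : ℕ) (hts : t ≤ s) :
    (m.choose t : ℝ) * (t : ℝ) ^ s
      ≤ Real.exp 1 ^ t * (s : ℝ) ^ (s - t) * (m : ℝ) ^ t := by
  have h1 : (m.choose t : ℝ) ≤ (m : ℝ) ^ t / t.factorial := by
    have := Nat.choose_le_pow_div (α := ℝ) t m
    simpa using this
  have h2 : (t : ℝ) ^ s ≤ (t : ℝ) ^ t * (s : ℝ) ^ (s - t) := by
    calc (t : ℝ) ^ s = (t : ℝ) ^ t * (t : ℝ) ^ (s - t) := by
          rw [← pow_add]; congr 1; omega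
      _ ≤ (t : ℝ) ^ t * (s : ℝ) ^ (s - t) := by
          have : (t:ℝ) ≤ (s:ℝ) := by exact_mod_cast hts
          gcongr
  calc (m.choose t : ℝ) * (t : ℝ) ^ s
      ≤ ((m : ℝ) ^ t / t.factorial) * ((t : ℝ) ^ t * (s : ℝ) ^ (s - t)) := by
        refine mul_le_mul h1 h2 (by positivity) (by positivity)
    _ = ((t : ℝ) ^ t / t.factorial) * (s : ℝ) ^ (s - t) * (m : ℝ) ^ t := by ring
    _ ≤ Real.exp 1 ^ t * (s : ℝ) ^ (s - t) * (m : ℝ) ^ t := by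
        gcongr
        exact pow_div_factorial_le_exp t

lemma per_s_bound (hm : 1 ≤ m) (hk1 : 1 ≤ k) (hkm : k ≤ m) {s : ℕ} (hs1 : 1 ≤ s)
    (hs : s ≤ k) (α : ℝ) (hα : 0 ≤ α) (hk : (k : ℝ) ≤ α * m)
    (hα8 : Real.exp 1 ^ 2 * α ≤ 1 / 8) :
    (k.choose s : ℝ) * (B k m s : ℝ) ≤ (1 / 2 : ℝ) ^ s * (m : ℝ) ^ (2 * k - 1) := by
  set E : ℝ := Real.exp 1 with hE
  have hE1 : (1 : ℝ) ≤ E := by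
    rw [hE]; calc (1:ℝ) = Real.exp 0 := by simp
      _ ≤ Real.exp 1 := Real.exp_le_exp.2 (by norm_num)
  -- per-pair bound
  have hpair : ∀ p ∈ Finset.HasAntidiagonal.antidiagonal (s - 1),
      ((m.choose p.1 : ℝ) * ((p.1 : ℝ) ^ s * (m : ℝ) ^ (k - s))) *
        ((m.choose p.2 : ℝ) * ((p.2 : ℝ) ^ s * (m : ℝ) ^ (k - s)))
      ≤ E ^ s * (s : ℝ) ^ (s + 1) * (m : ℝ) ^ (2 * k - s - 1) := by
    intro p hp
    have hpsum : p.1 + p.2 = s - 1 := Finset.HasAntidiagonal.mem_antidiagonal.1 hp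
    have ht0s : p.1 ≤ s := by omega
    have ht1s : p.2 ≤ s := by omega
    have b0 := choose_mul_pow_le m p.1 s ht0s
    have b1 := choose_mul_pow_le m p.2 s ht1s
    calc ((m.choose p.1 : ℝ) * ((p.1 : ℝ) ^ s * (m : ℝ) ^ (k - s))) *
          ((m.choose p.2 : ℝ) * ((p.2 : ℝ) ^ s * (m : ℝ) ^ (k - s)))
        = ((m.choose p.1 : ℝ) * (p.1 : ℝ) ^ s) * ((m.choose p.2 : ℝ) * (p.2 : ℝ) ^ s) *
            ((m : ℝ) ^ (k - s) * (m : ℝ) ^ (k - s)) := by ring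
      _ ≤ (E ^ p.1 * (s : ℝ) ^ (s - p.1) * (m : ℝ) ^ p.1) *
            (E ^ p.2 * (s : ℝ) ^ (s - p.2) * (m : ℝ) ^ p.2) *
            ((m : ℝ) ^ (k - s) * (m : ℝ) ^ (k - s)) := by
          refine mul_le_mul_of_nonneg_right (mul_le_mul b0 b1 (by positivity) ?_) (by positivity)
          have : (0:ℝ) < E ^ p.1 := by positivity
          positivity
      _ = E ^ (p.1 + p.2) * (s : ℝ) ^ ((s - p.1) + (s - p.2)) *
            (m : ℝ) ^ (p.1 + p.2 + (k - s) + (k - s)) := by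
          rw [pow_add E, pow_add (s:ℝ), pow_add (m:ℝ), pow_add (m:ℝ)]; ring
      _ = E ^ (s - 1) * (s : ℝ) ^ (s + 1) * (m : ℝ) ^ (2 * k - s - 1) := by
          have e1 : (s - p.1) + (s - p.2) = s + 1 := by omega
          have e2 : p.1 + p.2 + (k - s) + (k - s) = 2 * k - s - 1 := by omega
          rw [e1, e2, hpsum]
      _ ≤ E ^ s * (s : ℝ) ^ (s + 1) * (m : ℝ) ^ (2 * k - s - 1) := by
          have hEs : E ^ (s - 1) ≤ E ^ s := pow_le_pow_right₀ hE1 (by omega)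
          have h1 : (0:ℝ) ≤ (s : ℝ) ^ (s + 1) := by positivity
          have h2 : (0:ℝ) ≤ (m : ℝ) ^ (2 * k - s - 1) := by positivity
          exact mul_le_mul_of_nonneg_right (mul_le_mul_of_nonneg_right hEs h1) h2
  -- sum over antidiagonal
  have hB : (B k m s : ℝ) ≤ (s : ℝ) * (E ^ s * (s : ℝ) ^ (s + 1) * (m : ℝ) ^ (2 * k - s - 1)) := by
    have : (B k m s : ℝ) = ∑ p ∈ Finset.HasAntidiagonal.antidiagonal (s - 1),
        ((m.choose p.1 : ℝ) * ((p.1 : ℝ) ^ s * (m : ℝ) ^ (k - s))) *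
        ((m.choose p.2 : ℝ) * ((p.2 : ℝ) ^ s * (m : ℝ) ^ (k - s))) := by
      rw [B]; push_cast
      exact Finset.sum_congr rfl fun p _ => by ring
    rw [this]
    refine (Finset.sum_le_sum hpair).trans ?_
    rw [Finset.sum_const, Finset.Nat.card_antidiagonal, nsmul_eq_mul]
    have : ((s - 1 + 1 : ℕ) : ℝ) = (s : ℝ) := by
      congr 1; omega
    rw [this]
  have hchoose : (k.choose s : ℝ) * (s:ℝ) ^ s ≤ E ^ s * (k : ℝ) ^ s := by
    have h := choose_mul_pow_le k s s le_rfl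
    rwa [Nat.sub_self, pow_zero, mul_one] at h
  have hs4 : (s : ℝ) ^ 2 ≤ (4 : ℝ) ^ s := by
    have h1 : s ^ 2 ≤ 4 ^ s := by
      calc s ^ 2 ≤ (2 ^ s) ^ 2 := Nat.pow_le_pow_left (Nat.le_of_lt (Nat.lt_two_pow_self (n := s))) 2
        _ = 4 ^ s := by rw [← pow_mul, mul_comm, pow_mul]; norm_num
    exact_mod_cast h1
  have hkpow : (k : ℝ) ^ s ≤ (α * m) ^ s := by
    gcongr
  calc (k.choose s : ℝ) * (B k m s : ℝ)
      ≤ (k.choose s : ℝ) * ((s : ℝ) * (E ^ s * (s : ℝ) ^ (s + 1) * (m : ℝ) ^ (2 * k - s - 1))) := by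
        exact mul_le_mul_of_nonneg_left hB (Nat.cast_nonneg _)
    _ = (s:ℝ)^2 * E ^ s * ((k.choose s : ℝ) * (s:ℝ) ^ s) * (m : ℝ) ^ (2 * k - s - 1) := by
        rw [pow_succ]; ring
    _ ≤ (s:ℝ)^2 * E ^ s * (E ^ s * (k : ℝ) ^ s) * (m : ℝ) ^ (2 * k - s - 1) := by
        gcongr
    _ ≤ (4:ℝ)^s * E ^ s * (E ^ s * (α * m) ^ s) * (m : ℝ) ^ (2 * k - s - 1) := by
        gcongr
    _ = (4 * (E^2 * α)) ^ s * ((m:ℝ) ^ s * (m : ℝ) ^ (2 * k - s - 1)) := by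
        rw [mul_pow 4 (E ^ 2 * α), mul_pow (E^2) α, mul_pow α (m:ℝ),
          show ((E^2)^s) = E^s * E^s by rw [← pow_mul, two_mul, pow_add]]
        ring
    _ ≤ (1/2 : ℝ) ^ s * ((m:ℝ) ^ s * (m : ℝ) ^ (2 * k - s - 1)) := by
        have h4 : (0:ℝ) ≤ 4 * (E ^ 2 * α) := by
          have := sq_nonneg E
          nlinarith
        have h5 : 4 * (E ^ 2 * α) ≤ 1/2 := by linarith
        have := pow_le_pow_left₀ h4 h5 s
        exact mul_le_mul_of_nonneg_right this (by positivity)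
    _ = (1 / 2 : ℝ) ^ s * (m : ℝ) ^ (2 * k - 1) := by
        rw [← pow_add]
        congr 2
        omega

lemma geom_Icc (k : ℕ) : ∑ s ∈ Finset.Icc 1 k, ((1 : ℝ) / 2) ^ s = 1 - (1 / 2 : ℝ) ^ k := by
  induction k with
  | zero => simp
  | succ n ih =>
    rw [Finset.sum_Icc_succ_top (by omega), ih]
    ring

lemma bad_card_le_real (hm : 1 ≤ m) (hkm : k ≤ m) (α : ℝ) (hα : 0 ≤ α)
    (hk : (k : ℝ) ≤ α * m) (hα8 : Real.exp 1 ^ 2 * α ≤ 1 / 8) :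
    ((univ.filter fun q : (Fin k → Fin m) × (Fin k → Fin m) =>
        ¬ ∀ S : Finset (Fin k), S.card ≤ (S.image q.1).card + (S.image q.2).card).card : ℝ)
      ≤ (m : ℝ) ^ (2 * k) / m := by
  have hm0 : (0:ℝ) < m := by exact_mod_cast hm
  rcases Nat.eq_zero_or_pos k with hk0 | hk1
  · subst hk0
    have hempty : (univ.filter fun q : (Fin 0 → Fin m) × (Fin 0 → Fin m) =>
        ¬ ∀ S : Finset (Fin 0), S.card ≤ (S.image q.1).card + (S.image q.2).card) = ∅ := by
      refine Finset.filter_eq_empty_iff.2 fun q _ => ?_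
      push_neg
      intro S
      have : S = ∅ := Finset.eq_empty_of_isEmpty S
      simp [this]
    rw [hempty]
    simp

  · have h1 : ((univ.filter fun q : (Fin k → Fin m) × (Fin k → Fin m) =>
        ¬ ∀ S : Finset (Fin k), S.card ≤ (S.image q.1).card + (S.image q.2).card).card : ℝ)
        ≤ ((∑ s ∈ Finset.Icc 1 k, k.choose s * B k m s : ℕ) : ℝ) := by
      exact_mod_cast card_bad_le hkm
    have h2 : ((∑ s ∈ Finset.Icc 1 k, k.choose s * B k m s : ℕ) : ℝ)
        = ∑ s ∈ Finset.Icc 1 k, (k.choose s : ℝ) * (B k m s : ℝ) := by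
      push_cast; rfl
    have h3 : ∑ s ∈ Finset.Icc 1 k, (k.choose s : ℝ) * (B k m s : ℝ)
        ≤ ∑ s ∈ Finset.Icc 1 k, (1 / 2 : ℝ) ^ s * (m : ℝ) ^ (2 * k - 1) := by
      refine Finset.sum_le_sum fun s hsmem => ?_
      obtain ⟨hs1, hs2⟩ := Finset.mem_Icc.1 hsmem
      exact per_s_bound hm hk1 hkm hs1 hs2 α hα hk hα8
    have h4 : ∑ s ∈ Finset.Icc 1 k, (1 / 2 : ℝ) ^ s * (m : ℝ) ^ (2 * k - 1)
        ≤ (m : ℝ) ^ (2 * k - 1) := by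
      rw [← Finset.sum_mul, geom_Icc]
      have : (1 : ℝ) - (1/2 : ℝ) ^ k ≤ 1 := by
        have : (0:ℝ) ≤ (1/2:ℝ)^k := by positivity
        linarith
      nlinarith [pow_nonneg (le_of_lt hm0) (2 * k - 1)]
    have h5 : (m : ℝ) ^ (2 * k - 1) = (m : ℝ) ^ (2 * k) / m := by
      rw [eq_div_iff (ne_of_gt hm0), ← pow_succ]
      congr 1
      omega
    linarith [h1, h2.le, h3, h4, h5.le]

end ExpansionAux

open ExpansionAux

/-- For a suitably small constant `α > 0`: if `k = ⌊αm⌋` objects are hashed into two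
layers of `m` cache nodes each by two independent uniformly random hash functions, then
with probability `1 − o(1)` as `m → ∞` the resulting bipartite graph satisfies the
expansion property `|Γ(S)| ≥ |S|` for every subset `S` of objects. -/
theorem expansion_property_whp :
    ∃ α₀ : ℝ, 0 < α₀ ∧ ∀ α : ℝ, 0 < α → α ≤ α₀ →
      Filter.Tendsto (fun m : ℕ =>
        ((univ.filter (fun q : (Fin ⌊α * (m : ℝ)⌋₊ → Fin m) × (Fin ⌊α * (m : ℝ)⌋₊ → Fin m) =>
            ∀ S : Finset (Fin ⌊α * (m : ℝ)⌋₊),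
              S.card ≤ (S.image q.1).card + (S.image q.2).card)).card : ℝ)
          / ((m : ℝ) ^ (2 * ⌊α * (m : ℝ)⌋₊)))
        Filter.atTop (nhds 1) := by
  refine ⟨(8 * Real.exp 1 ^ 2)⁻¹, by positivity, fun α hα hα0 => ?_⟩
  have hE1 : (1 : ℝ) ≤ Real.exp 1 := by
    calc (1:ℝ) = Real.exp 0 := by simp
      _ ≤ Real.exp 1 := Real.exp_le_exp.2 (by norm_num)
  have hE2 : (0:ℝ) < Real.exp 1 ^ 2 := by positivity
  have hα8 : Real.exp 1 ^ 2 * α ≤ 1 / 8 := by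
    have h := mul_le_mul_of_nonneg_left hα0 hE2.le
    have heq : Real.exp 1 ^ 2 * (8 * Real.exp 1 ^ 2)⁻¹ = 1 / 8 := by
      field_simp
    linarith [heq ▸ h]
  have hα1 : α ≤ 1 := by
    have h8 : (8:ℝ) ≤ 8 * Real.exp 1 ^ 2 := by nlinarith
    have : (8 * Real.exp 1 ^ 2)⁻¹ ≤ (8:ℝ)⁻¹ := by
      apply inv_anti₀ (by norm_num) h8
    linarith
  -- squeeze
  have hlow : Filter.Tendsto (fun m : ℕ => 1 - 1 / (m : ℝ)) Filter.atTop (nhds 1) := by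
    have h2 := (tendsto_const_nhds : Filter.Tendsto (fun _ : ℕ => (1:ℝ))
      Filter.atTop (nhds 1)).sub tendsto_one_div_atTop_nhds_zero_nat
    simpa using h2
  refine tendsto_of_tendsto_of_tendsto_of_le_of_le' hlow tendsto_const_nhds ?_ ?_
  · -- lower bound eventually
    filter_upwards [Filter.eventually_ge_atTop 1] with m hm
    set K := ⌊α * (m : ℝ)⌋₊ with hK
    have hm0 : (0:ℝ) < m := by exact_mod_cast hm
    have hKle : (K : ℝ) ≤ α * m := Nat.floor_le (by positivity)
    have hKm : K ≤ m := by
      have h1 : α * (m:ℝ) ≤ (m:ℝ) := by nlinarith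
      calc K ≤ ⌊(m:ℝ)⌋₊ := Nat.floor_le_floor h1
        _ = m := Nat.floor_natCast m
    have hpow_pos : (0:ℝ) < (m : ℝ) ^ (2 * K) := by positivity
    have hcards : ((univ.filter (fun q : (Fin K → Fin m) × (Fin K → Fin m) =>
            ∀ S : Finset (Fin K), S.card ≤ (S.image q.1).card + (S.image q.2).card)).card : ℝ)
          + ((univ.filter (fun q : (Fin K → Fin m) × (Fin K → Fin m) =>
            ¬ ∀ S : Finset (Fin K), S.card ≤ (S.image q.1).card + (S.image q.2).card)).card : ℝ)
          = (m : ℝ) ^ (2 * K) := by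
      have h := Finset.card_filter_add_card_filter_not
        (s := (univ : Finset ((Fin K → Fin m) × (Fin K → Fin m))))
        (p := fun q => ∀ S : Finset (Fin K), S.card ≤ (S.image q.1).card + (S.image q.2).card)
      have hcard : (univ : Finset ((Fin K → Fin m) × (Fin K → Fin m))).card = m ^ (2 * K) := by
        rw [Finset.card_univ, Fintype.card_prod, Fintype.card_fun, Fintype.card_fin,
          Fintype.card_fin, ← pow_add, two_mul]
      rw [hcard] at h
      exact_mod_cast h
    have hbad := bad_card_le_real hm hKm α hα.le hKle hα8
    have key : 1 - 1/(m:ℝ) ≤ (((univ.filter (fun q : (Fin K → Fin m) × (Fin K → Fin m) =>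
            ∀ S : Finset (Fin K), S.card ≤ (S.image q.1).card + (S.image q.2).card)).card : ℝ))
          / ((m : ℝ) ^ (2 * K)) := by
      rw [le_div_iff₀ hpow_pos]
      have : ((univ.filter (fun q : (Fin K → Fin m) × (Fin K → Fin m) =>
            ∀ S : Finset (Fin K), S.card ≤ (S.image q.1).card + (S.image q.2).card)).card : ℝ)
          = (m : ℝ) ^ (2 * K) - ((univ.filter (fun q : (Fin K → Fin m) × (Fin K → Fin m) =>
            ¬ ∀ S : Finset (Fin K), S.card ≤ (S.image q.1).card + (S.image q.2).card)).card : ℝ) := by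
        linarith
      rw [this]
      have hdiv : (m : ℝ) ^ (2*K) / m * m = (m:ℝ)^(2*K) := by field_simp
      have h1m : (1 - 1/(m:ℝ)) * (m:ℝ)^(2*K) = (m:ℝ)^(2*K) - (m:ℝ)^(2*K)/m := by
        field_simp
      rw [h1m]
      linarith
    exact key
  · -- upper bound eventually
    filter_upwards [Filter.eventually_ge_atTop 1] with m hm
    have hm0 : (0:ℝ) < m := by exact_mod_cast hm
    set K := ⌊α * (m : ℝ)⌋₊
    have hpow_pos : (0:ℝ) < (m : ℝ) ^ (2 * K) := by positivity
    rw [div_le_one hpow_pos]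
    have h1 : (univ.filter (fun q : (Fin K → Fin m) × (Fin K → Fin m) =>
            ∀ S : Finset (Fin K), S.card ≤ (S.image q.1).card + (S.image q.2).card)).card
        ≤ m ^ (2 * K) := by
      calc _ ≤ (univ : Finset ((Fin K → Fin m) × (Fin K → Fin m))).card :=
            Finset.card_filter_le _ _
        _ = m ^ (2 * K) := by
            rw [Finset.card_univ, Fintype.card_prod, Fintype.card_fun, Fintype.card_fin,
              Fintype.card_fin, ← pow_add, two_mul]
    exact_mod_cast h1
end

section
/- Let k = αm, R = (1−ε)·α·m·T̃, and p_i = (1−ε)T̃/R for all i (uniform rates). For suitably small constant α and any ε > 0, with high probability (over the two independent uniform hash functions) there exists a perfect fractional matching: a weight assignment w on edges of the two-hash bipartite graph G such that each object's full rate p_i·R is served and no cache node serves more than T̃. -/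
open Finset
open scoped Classical

/-- A perfect fractional matching in the two-hash bipartite graph: weights on edges
(each object `i` connects to node `h₀ i` in layer `A` and `h₁ i` in layer `B`) such that
each object's full rate `r` is served and no cache node serves more than `T`. -/
def HasPerfectMatching (k m : ℕ) (h₀ h₁ : Fin k → Fin m) (r T : ℝ) : Prop :=
  ∃ w : Fin k → (Fin m ⊕ Fin m) → ℝ,
    (∀ i v, 0 ≤ w i v) ∧
    (∀ i v, w i v ≠ 0 → v = Sum.inl (h₀ i) ∨ v = Sum.inr (h₁ i)) ∧
    (∀ i, ∑ v, w i v = r) ∧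
    (∀ v, ∑ i, w i v ≤ T)

/-! Each object demands `(1 - ε) T ≤ T`, so it is enough to send every object wholly to one of its
two nodes, injectively. By Hall's theorem this is impossible only if some `A` nodes of the first
layer and `B` nodes of the second together receive both hashes of more than `#A + #B` objects.
A union bound over `A`, `B` and a set of `t = #A + #B + 1` such objects bounds the probability
of this by `∑ C(m,a) C(m,b) C(k,t) (ab/m²)^t`; the estimates `C(n,r) ≤ n^r/r!` and
`t^t ≤ 3^t t!` bound the `(a, b)` term by `(36/200)^t / m ≤ 5^(-t) / m` once `200 k ≤ m`,
so a matching fails to exist with probability `O(1/m)`. -/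

open scoped Nat

section Hall

variable {ι β : Type*} [Fintype ι] [DecidableEq β]

def HallDeficient (h₀ h₁ : ι → β) : Prop :=
  ∃ A B : Finset β, #A + #B < #{i | h₀ i ∈ A ∧ h₁ i ∈ B}

theorem exists_injective_choice_of_not_hallDeficient {h₀ h₁ : ι → β}
    (hHall : ¬HallDeficient h₀ h₁) :
    ∃ f : ι → β ⊕ β, Function.Injective f ∧ ∀ i, f i = .inl (h₀ i) ∨ f i = .inr (h₁ i) := by
  have hNeighbours (s : Finset ι) :
      s.biUnion (fun i => {.inl (h₀ i), .inr (h₁ i)}) = (s.image h₀).disjSum (s.image h₁) := by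
    ext (v | v) <;> simp [eq_comm]
  obtain ⟨f, hf, hmem⟩ := (Finset.all_card_le_biUnion_card_iff_exists_injective
    fun i => ({.inl (h₀ i), .inr (h₁ i)} : Finset (β ⊕ β))).1 fun s => by
      rw [hNeighbours, card_disjSum]
      refine (card_le_card fun i hi => ?_).trans (not_lt.1 fun h => hHall ⟨_, _, h⟩)
      simp only [mem_filter, mem_univ, true_and]
      exact ⟨mem_image_of_mem _ hi, mem_image_of_mem _ hi⟩
  exact ⟨f, hf, fun i => by simpa using hmem i⟩

end Hall

theorem hasPerfectMatching_of_injective {k m : ℕ} {h₀ h₁ : Fin k → Fin m}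
    {f : Fin k → Fin m ⊕ Fin m} (hf : Function.Injective f)
    (hfe : ∀ i, f i = .inl (h₀ i) ∨ f i = .inr (h₁ i)) {r T : ℝ} (hr : 0 ≤ r) (hrT : r ≤ T) :
    HasPerfectMatching k m h₀ h₁ r T := by
  refine ⟨fun i => Pi.single (f i) r, fun i v => ?_, fun i v hv => ?_, fun i => ?_, fun v => ?_⟩
  · by_cases hv : v = f i <;> simp [hv, hr]
  · obtain rfl : v = f i := by by_contra h; simp [h] at hv
    exact hfe i
  · simp
  · by_cases hv : ∃ j, f j = v
    · obtain ⟨j, rfl⟩ := hv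
      rw [sum_eq_single j (fun i _ hij => by simp [hf.ne hij.symm]) (by simp)]
      simpa using hrT
    · simp [fun i => Ne.symm (not_exists.1 hv i), hr.trans hrT]

theorem hasPerfectMatching_of_not_hallDeficient {k m : ℕ} {h₀ h₁ : Fin k → Fin m}
    (hHall : ¬HallDeficient h₀ h₁) {r T : ℝ} (hr : 0 ≤ r) (hrT : r ≤ T) :
    HasPerfectMatching k m h₀ h₁ r T :=
  let ⟨_, hf, hfe⟩ := exists_injective_choice_of_not_hallDeficient hHall
  hasPerfectMatching_of_injective hf hfe hr hrT

section Counting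

variable {ι β : Type*} [Fintype ι] [DecidableEq ι] [Fintype β] [DecidableEq β]

theorem card_filter_forall_mem (S : Finset ι) (A : Finset β) :
    #{h : ι → β | ∀ i ∈ S, h i ∈ A} = #A ^ #S * Fintype.card β ^ (Fintype.card ι - #S) := by
  have hpi : ({h : ι → β | ∀ i ∈ S, h i ∈ A} : Finset _)
      = Fintype.piFinset fun i => if i ∈ S then A else univ := by
    ext h
    simp only [mem_filter, mem_univ, true_and, Fintype.mem_piFinset]
    exact forall_congr' fun i => by by_cases hi : i ∈ S <;> simp [hi]
  rw [hpi, Fintype.card_piFinset]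
  simp only [apply_ite card, card_univ]
  rw [prod_ite, prod_const, prod_const, filter_mem_eq_inter, univ_inter, filter_not,
    filter_mem_eq_inter, univ_inter, card_sdiff_of_subset (subset_univ S), card_univ]

/-- `C(k, t)` choices of `t` objects, whose `h₀`- and `h₁`-values lie in fixed sets of sizes `a`
and `b`, the other `k - t` values being free. -/
def overloadCount (n k a b t : ℕ) : ℕ :=
  k.choose t * ((a ^ t * n ^ (k - t)) * (b ^ t * n ^ (k - t)))

theorem card_filter_le_overloadCount (A B : Finset β) (t : ℕ) :
    #{q : (ι → β) × (ι → β) | t ≤ #{i | q.1 i ∈ A ∧ q.2 i ∈ B}}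
      ≤ overloadCount (Fintype.card β) (Fintype.card ι) #A #B t := by
  have hcover : ({q : (ι → β) × (ι → β) | t ≤ #{i | q.1 i ∈ A ∧ q.2 i ∈ B}} : Finset _)
      ⊆ (powersetCard t univ).biUnion fun S =>
          ({h | ∀ i ∈ S, h i ∈ A} : Finset (ι → β)) ×ˢ ({h | ∀ i ∈ S, h i ∈ B} : Finset _) := by
    intro q hq
    obtain ⟨S, hS, rfl⟩ := exists_subset_card_eq (mem_filter.1 hq).2
    refine mem_biUnion.2 ⟨S, mem_powersetCard.2 ⟨subset_univ S, rfl⟩, ?_⟩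
    simp only [mem_product, mem_filter, mem_univ, true_and]
    exact ⟨fun i hi => (mem_filter.1 (hS hi)).2.1, fun i hi => (mem_filter.1 (hS hi)).2.2⟩
  refine (card_le_card hcover).trans (card_biUnion_le.trans_eq ?_)
  rw [sum_congr rfl fun S hS => by rw [card_product, card_filter_forall_mem,
    card_filter_forall_mem, (mem_powersetCard.1 hS).2], sum_const, card_powersetCard, card_univ,
    smul_eq_mul, overloadCount]

theorem card_hallDeficient_le :
    #{q : (ι → β) × (ι → β) | HallDeficient q.1 q.2}
      ≤ ∑ a ∈ range (Fintype.card β + 1), ∑ b ∈ range (Fintype.card β + 1),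
          (Fintype.card β).choose a * ((Fintype.card β).choose b *
            overloadCount (Fintype.card β) (Fintype.card ι) a b (a + b + 1)) := by
  have hcover : ({q : (ι → β) × (ι → β) | HallDeficient q.1 q.2} : Finset _)
      ⊆ univ.biUnion fun A : Finset β => univ.biUnion fun B : Finset β =>
          {q : (ι → β) × (ι → β) | #A + #B + 1 ≤ #{i | q.1 i ∈ A ∧ q.2 i ∈ B}} := by
    intro q hq
    obtain ⟨A, B, hAB⟩ := (mem_filter.1 hq).2
    simpa using ⟨A, B, hAB⟩
  refine (card_le_card hcover).trans (card_biUnion_le.trans ((sum_le_sum fun A _ =>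
    card_biUnion_le.trans (sum_le_sum fun B _ => card_filter_le_overloadCount A B _)).trans_eq ?_))
  set n := Fintype.card β
  set k := Fintype.card ι
  rw [← powerset_univ, sum_congr rfl fun A _ =>
    sum_powerset_apply_card fun b => overloadCount n k #A b (#A + b + 1)]
  rw [sum_powerset_apply_card fun a => ∑ b ∈ range (#univ + 1),
    (#univ).choose b • overloadCount n k a b (a + b + 1)]
  simp only [card_univ, smul_eq_mul, mul_sum, n]

end Counting

theorem pow_self_le_three_pow_mul_factorial (t : ℕ) : t ^ t ≤ 3 ^ t * t ! := by
  have hexp : (t : ℝ) ^ t / t ! ≤ 3 ^ t :=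
    calc (t : ℝ) ^ t / t ! ≤ Real.exp t := Real.pow_div_factorial_le_exp _ t.cast_nonneg t
      _ = Real.exp 1 ^ t := by rw [← Real.exp_nat_mul, mul_one]
      _ ≤ 3 ^ t := pow_le_pow_left₀ (Real.exp_pos 1).le Real.exp_one_lt_three.le t
  rw [div_le_iff₀ (by positivity)] at hexp
  exact_mod_cast hexp

theorem factorial_mul_choose_le_pow (n r : ℕ) : r ! * n.choose r ≤ n ^ r :=
  Nat.descFactorial_eq_factorial_mul_choose n r ▸ Nat.descFactorial_le_pow n r

theorem mul_pow_le_factorial_mul_factorial_mul_factorial (a b : ℕ) :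
    (a * b) ^ (a + b + 1) ≤ 36 ^ (a + b + 1) * (a ! * b ! * (a + b + 1)!) := by
  set t := a + b + 1
  have hsplit : (a + b)! ≤ 2 ^ t * (a ! * b !) :=
    calc (a + b)! = (a + b).choose b * (a ! * b !) := by
          rw [← mul_assoc, Nat.add_choose_mul_factorial_mul_factorial]
      _ ≤ 2 ^ t * (a ! * b !) :=
          Nat.mul_le_mul_right _ ((Nat.choose_le_two_pow _ _).trans (Nat.pow_le_pow_right two_pos
            (by omega)))
  calc (a * b) ^ t ≤ t ^ t * t ^ t := by
        rw [← mul_pow]; exact Nat.pow_le_pow_left (Nat.mul_le_mul (by omega) (by omega)) t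
    _ ≤ (3 ^ t * t !) * (3 ^ t * (t * (a + b)!)) := by
        rw [← Nat.factorial_succ]
        exact Nat.mul_le_mul (pow_self_le_three_pow_mul_factorial t)
          (pow_self_le_three_pow_mul_factorial t)
    _ ≤ (3 ^ t * t !) * (3 ^ t * (2 ^ t * (2 ^ t * (a ! * b !)))) := by
        gcongr
        exact Nat.lt_two_pow_self.le
    _ = 36 ^ t * (a ! * b ! * t !) := by
        rw [show (36 : ℕ) = 3 * 3 * 2 * 2 by rfl, mul_pow, mul_pow, mul_pow]; ring

theorem choose_mul_choose_mul_choose_mul_pow_le {n k : ℕ} (hk : 200 * k ≤ n) (a b : ℕ) :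
    n.choose a * n.choose b * k.choose (a + b + 1) * (a * b) ^ (a + b + 1) * 200 ^ (a + b + 1)
      ≤ 36 ^ (a + b + 1) * n ^ (2 * (a + b) + 1) := by
  set t := a + b + 1
  calc n.choose a * n.choose b * k.choose t * (a * b) ^ t * 200 ^ t
      ≤ n.choose a * n.choose b * k.choose t * (36 ^ t * (a ! * b ! * t !)) * 200 ^ t := by
        gcongr; exact mul_pow_le_factorial_mul_factorial_mul_factorial a b
    _ = 36 ^ t * ((a ! * n.choose a) * (b ! * n.choose b) * ((t ! * k.choose t) * 200 ^ t)) :=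
        by ring
    _ ≤ 36 ^ t * (n ^ a * n ^ b * (k ^ t * 200 ^ t)) := by
        gcongr <;> exact factorial_mul_choose_le_pow _ _
    _ ≤ 36 ^ t * (n ^ a * n ^ b * n ^ t) := by
        rw [← mul_pow, mul_comm k]; gcongr
    _ = 36 ^ t * n ^ (2 * (a + b) + 1) := by
        rw [← pow_add, ← pow_add]; congr 2; omega

theorem choose_mul_choose_mul_overloadCount_le {n k : ℕ} (hk : 200 * k ≤ n) (a b : ℕ) :
    n.choose a * (n.choose b * overloadCount n k a b (a + b + 1)) * 200 ^ (a + b + 1) * n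
      ≤ 36 ^ (a + b + 1) * n ^ (2 * k) := by
  set t := a + b + 1
  rcases lt_or_ge k t with hkt | htk
  · simp [overloadCount, Nat.choose_eq_zero_of_lt hkt]
  calc n.choose a * (n.choose b * overloadCount n k a b t) * 200 ^ t * n
      = n.choose a * n.choose b * k.choose t * (a * b) ^ t * 200 ^ t
          * n ^ (2 * (k - t) + 1) := by
        rw [overloadCount, mul_pow]; ring
    _ ≤ 36 ^ t * n ^ (2 * (a + b) + 1) * n ^ (2 * (k - t) + 1) := by
        exact Nat.mul_le_mul_right _ (choose_mul_choose_mul_choose_mul_pow_le hk a b)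
    _ = 36 ^ t * n ^ (2 * k) := by
        rw [mul_assoc, ← pow_add]; congr 2; omega

theorem sum_range_sum_range_one_fifth_pow_le (N : ℕ) :
    ∑ a ∈ range N, ∑ b ∈ range N, (1 / 5 : ℝ) ^ (a + b + 1) ≤ 1 := by
  have hgeom : ∑ i ∈ range N, (1 / 5 : ℝ) ^ i ≤ 5 / 4 := by
    have := geom_sum_Ico_le_of_lt_one (x := (1 / 5 : ℝ)) (m := 0) (n := N) (by norm_num)
      (by norm_num)
    norm_num [← range_eq_Ico] at this ⊢; exact this
  calc ∑ a ∈ range N, ∑ b ∈ range N, (1 / 5 : ℝ) ^ (a + b + 1)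
      = 1 / 5 * ((∑ a ∈ range N, (1 / 5 : ℝ) ^ a) * ∑ b ∈ range N, (1 / 5 : ℝ) ^ b) := by
        rw [sum_mul_sum, mul_sum]
        exact sum_congr rfl fun _ _ => by rw [mul_sum]; exact sum_congr rfl fun _ _ => by ring
    _ ≤ 1 / 5 * (5 / 4 * (5 / 4)) := by gcongr
    _ ≤ 1 := by norm_num

theorem card_hallDeficient_le_div {ι β : Type*} [Fintype ι] [DecidableEq ι] [Fintype β]
    [DecidableEq β]
    (hk : 200 * Fintype.card ι ≤ Fintype.card β) (hn : 0 < Fintype.card β) :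
    (#{q : (ι → β) × (ι → β) | HallDeficient q.1 q.2} : ℝ)
      ≤ (Fintype.card β : ℝ) ^ (2 * Fintype.card ι) / Fintype.card β := by
  set n := Fintype.card β
  set k := Fintype.card ι
  have hterm (a b : ℕ) : (n.choose a * (n.choose b * overloadCount n k a b (a + b + 1)) : ℝ)
      ≤ (n : ℝ) ^ (2 * k) / n * (1 / 5) ^ (a + b + 1) := by
    have h : (n.choose a * (n.choose b * overloadCount n k a b (a + b + 1)) : ℝ)
        * 200 ^ (a + b + 1) * n ≤ 36 ^ (a + b + 1) * n ^ (2 * k) := by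
      exact_mod_cast choose_mul_choose_mul_overloadCount_le hk a b
    calc (n.choose a * (n.choose b * overloadCount n k a b (a + b + 1)) : ℝ)
        ≤ 36 ^ (a + b + 1) * n ^ (2 * k) / (200 ^ (a + b + 1) * n) := by
          rw [le_div_iff₀ (by positivity), ← mul_assoc]; exact h
      _ = (n : ℝ) ^ (2 * k) / n * (36 / 200) ^ (a + b + 1) := by rw [div_pow]; ring
      _ ≤ (n : ℝ) ^ (2 * k) / n * (1 / 5) ^ (a + b + 1) := by
          gcongr _ * ?_
          exact pow_le_pow_left₀ (by norm_num) (by norm_num) _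
  calc (#{q : (ι → β) × (ι → β) | HallDeficient q.1 q.2} : ℝ)
      ≤ ∑ a ∈ range (n + 1), ∑ b ∈ range (n + 1),
          (n.choose a * (n.choose b * overloadCount n k a b (a + b + 1)) : ℝ) := by
        exact_mod_cast card_hallDeficient_le
    _ ≤ ∑ a ∈ range (n + 1), ∑ b ∈ range (n + 1),
          (n : ℝ) ^ (2 * k) / n * (1 / 5) ^ (a + b + 1) :=
        sum_le_sum fun a _ => sum_le_sum fun b _ => hterm a b
    _ ≤ (n : ℝ) ^ (2 * k) / n := by
        simp only [← mul_sum]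
        exact mul_le_of_le_one_right (by positivity) (sum_range_sum_range_one_fifth_pow_le _)

theorem card_fin_fun_prod (k m : ℕ) :
    Fintype.card ((Fin k → Fin m) × (Fin k → Fin m)) = m ^ (2 * k) := by
  simp only [Fintype.card_prod, Fintype.card_fun, Fintype.card_fin, two_mul, pow_add]

theorem one_sub_inv_le_card_hasPerfectMatching_div {k m : ℕ} (hk : 200 * k ≤ m) (hm : 0 < m)
    {r T : ℝ} (hr : 0 ≤ r) (hrT : r ≤ T) :
    1 - 1 / (m : ℝ) ≤
      #{q : (Fin k → Fin m) × (Fin k → Fin m) | HasPerfectMatching k m q.1 q.2 r T}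
        / (m : ℝ) ^ (2 * k) := by
  set bad := ({q | HallDeficient q.1 q.2} : Finset ((Fin k → Fin m) × (Fin k → Fin m)))
  set good := ({q | HasPerfectMatching k m q.1 q.2 r T} :
    Finset ((Fin k → Fin m) × (Fin k → Fin m)))
  have hgood : #(univ \ bad) ≤ #good :=
    card_le_card fun q hq => mem_filter.2 ⟨mem_univ q, hasPerfectMatching_of_not_hallDeficient
      (fun h => (mem_sdiff.1 hq).2 (mem_filter.2 ⟨mem_univ q, h⟩)) hr hrT⟩
  rw [card_univ_sdiff, card_fin_fun_prod, Nat.sub_le_iff_le_add] at hgood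
  have hgoodR : (m : ℝ) ^ (2 * k) ≤ #good + #bad := by exact_mod_cast hgood
  have hbad : (#bad : ℝ) ≤ (m : ℝ) ^ (2 * k) / m := by
    simpa using card_hallDeficient_le_div (ι := Fin k) (β := Fin m) (by simpa) (by simpa)
  rw [le_div_iff₀ (by positivity)]
  calc (1 - 1 / (m : ℝ)) * m ^ (2 * k) = m ^ (2 * k) - m ^ (2 * k) / m := by ring
    _ ≤ _ := by linarith

/-- Let `k = ⌊αm⌋`, `R = (1−ε)αmT̃`, and uniform rates `p i = (1−ε)T̃/R`, so each
object demands `p i · R = (1−ε)T̃`. For suitably small constant `α` and any `ε ∈ (0,1)`,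
with high probability (over the two independent uniform hash functions, as `m → ∞`)
a perfect fractional matching exists. -/
theorem uniform_rates_matching_whp :
    ∃ α₀ : ℝ, 0 < α₀ ∧ ∀ α : ℝ, 0 < α → α ≤ α₀ →
      ∀ ε : ℝ, 0 < ε → ε < 1 → ∀ T : ℝ, 0 < T →
        Filter.Tendsto (fun m : ℕ =>
          ((univ.filter
              (fun q : (Fin ⌊α * (m : ℝ)⌋₊ → Fin m) × (Fin ⌊α * (m : ℝ)⌋₊ → Fin m) =>
                HasPerfectMatching ⌊α * (m : ℝ)⌋₊ m q.1 q.2 ((1 - ε) * T) T)).card : ℝ)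
            / ((m : ℝ) ^ (2 * ⌊α * (m : ℝ)⌋₊)))
          Filter.atTop (nhds 1) := by
  refine ⟨1 / 200, by norm_num, fun α hα hα₀ ε hε hε₁ T hT => ?_⟩
  have hr : 0 ≤ (1 - ε) * T := mul_nonneg (by linarith) hT.le
  have hrT : (1 - ε) * T ≤ T := by nlinarith
  have hk (m : ℕ) : 200 * ⌊α * (m : ℝ)⌋₊ ≤ m := by
    have : (⌊α * (m : ℝ)⌋₊ : ℝ) ≤ α * m := Nat.floor_le (by positivity)
    have : (200 * ⌊α * (m : ℝ)⌋₊ : ℝ) ≤ m := by nlinarith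
    exact_mod_cast this
  refine tendsto_of_tendsto_of_tendsto_of_le_of_le' (g := fun m : ℕ => 1 - 1 / (m : ℝ))
    (by simpa using (tendsto_const_nhds (x := (1 : ℝ))).sub tendsto_one_div_atTop_nhds_zero_nat)
    tendsto_const_nhds ?_ (Filter.Eventually.of_forall fun m => ?_)
  · filter_upwards [Filter.eventually_gt_atTop 0] with m hm
    exact one_sub_inv_le_card_hasPerfectMatching_div (hk m) hm hr hrT
  · refine div_le_one_of_le₀ ?_ (by positivity)
    exact_mod_cast (card_le_univ _).trans_eq (card_fin_fun_prod _ _)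
end

section
/- If the (α, γ, t)-graph family is (1−δ)-feasible, then for every positive integer K, the (Kα, γ, t)-graph family is also (1−δ)-feasible: replacing each cache node of capacity t by K virtual nodes of capacity t/K, and coupling hash functions via h⁽¹⁾(j) = ⌊h⁽²⁾(j)/K⌋, any perfect fractional matching in the finer system induces one in the coarser system. -/
open Finset
open scoped Classical

/-- The `(α, γ, t)`-graph family is `(1−δ)`-feasible: the `i`-th member has `i` cache
nodes per layer of capacity `t` and `⌊αi⌋` objects of equal rates summing to
`γ(1−ε)·i·t`; for all sufficiently large `i`, a perfect fractional matching exists with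
probability at least `1−δ` over the two uniform hash functions. -/
def FamilyFeasible (α γ t δ ε : ℝ) : Prop :=
  ∃ I : ℕ, ∀ i : ℕ, I ≤ i →
    (1 - δ) * ((i : ℝ) ^ (2 * ⌊α * (i : ℝ)⌋₊)) ≤
      ((Finset.univ.filter
          (fun q : (Fin ⌊α * (i : ℝ)⌋₊ → Fin i) × (Fin ⌊α * (i : ℝ)⌋₊ → Fin i) =>
            HasPerfectMatching ⌊α * (i : ℝ)⌋₊ i q.1 q.2
              (γ * (1 - ε) * i * t / ⌊α * (i : ℝ)⌋₊) t)).card : ℝ)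

/-!
Apply the feasibility of the `α`-family at size `i * K`: its `⌊Kα i⌋` objects have rate
`K r`, where `r` is the object rate of the `Kα`-family at size `i`. Merging each block of `K`
consecutive fine cache nodes (`v ↦ ⌊v / K⌋`) and scaling the flow by `1 / K` turns a perfect
fractional matching of the fine system into one of the coarse system. Every coarse pair of hash
functions has exactly `K ^ (2k)` fine lifts, which is also the ratio of the sizes of the two
probability spaces, so the proportion of good hash pairs can only grow.
-/

lemma card_fiber_divNat (i K : ℕ) (u : Fin i) : #{v : Fin (i * K) | v.divNat = u} = K := by
  calc #{v : Fin (i * K) | v.divNat = u}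
      = #({u} ×ˢ (univ : Finset (Fin K))) :=
        card_equiv finProdFinEquiv.symm fun v => by simp [finProdFinEquiv_symm_apply, eq_comm]
    _ = K := by simp

section Fibers

variable {α β : Type*} [Fintype α] [DecidableEq β] {K : ℕ}

lemma card_fiber_sumMap (f : α → β) (hf : ∀ b, #{a | f a = b} = K) (b : β ⊕ β) :
    #{a | Sum.map f f a = b} = K := by
  rcases b with b | b
  · rw [← hf b, ← card_map Function.Embedding.inl (s := {a | f a = b})]
    congr 1
    ext (a | a) <;> simp
  · rw [← hf b, ← card_map Function.Embedding.inr (s := {a | f a = b})]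
    congr 1
    ext (a | a) <;> simp

lemma card_fiber_comp (ι : Type*) [Fintype ι] [DecidableEq ι] (f : α → β)
    (hf : ∀ b, #{a | f a = b} = K) (g : ι → β) : #{x : ι → α | f ∘ x = g} = K ^ Fintype.card ι := by
  have hpi : ({x : ι → α | f ∘ x = g} : Finset (ι → α)) =
      Fintype.piFinset fun j => {a | f a = g j} := by
    ext x
    simp [Fintype.mem_piFinset, funext_iff]
  simp [hpi, Fintype.card_piFinset, hf]

end Fibers

namespace HasPerfectMatching

variable {k m n : ℕ} {h₀ h₁ : Fin k → Fin m} {r T : ℝ}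

lemma smul {c : ℝ} (hc : 0 ≤ c) (H : HasPerfectMatching k m h₀ h₁ r T) :
    HasPerfectMatching k m h₀ h₁ (c * r) (c * T) := by
  obtain ⟨w, hw_nonneg, hw_supp, hw_row, hw_col⟩ := H
  refine ⟨fun j v => c * w j v, fun j v => mul_nonneg hc (hw_nonneg j v),
    fun j v hv => hw_supp j v (right_ne_zero_of_mul hv), fun j => ?_, fun v => ?_⟩
  · rw [← mul_sum, hw_row]
  · rw [← mul_sum]
    exact mul_le_mul_of_nonneg_left (hw_col v) hc

lemma map {K : ℕ} (f : Fin m → Fin n) (hf : ∀ u, #{v | f v = u} = K)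
    (H : HasPerfectMatching k m h₀ h₁ r T) :
    HasPerfectMatching k n (f ∘ h₀) (f ∘ h₁) r (K * T) := by
  obtain ⟨w, hw_nonneg, hw_supp, hw_row, hw_col⟩ := H
  set F : Fin m ⊕ Fin m → Fin n ⊕ Fin n := Sum.map f f
  refine ⟨fun j u => ∑ v with F v = u, w j v, fun j u => sum_nonneg fun v _ => hw_nonneg j v,
    fun j u hu => ?_, fun j => ?_, fun u => ?_⟩
  · obtain ⟨v, hv, hwv⟩ := exists_ne_zero_of_sum_ne_zero hu
    rw [(mem_filter.1 hv).2.symm]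
    rcases hw_supp j v hwv with rfl | rfl
    exacts [Or.inl rfl, Or.inr rfl]
  · rw [sum_fiberwise, hw_row]
  · calc ∑ j, ∑ v with F v = u, w j v
        = ∑ v with F v = u, ∑ j, w j v := sum_comm
      _ ≤ ∑ v with F v = u, T := sum_le_sum fun v _ => hw_col v
      _ = K * T := by rw [sum_const, card_fiber_sumMap f hf, nsmul_eq_mul]

lemma merge {K : ℕ} (hK : 0 < K) (f : Fin m → Fin n) (hf : ∀ u, #{v | f v = u} = K)
    (H : HasPerfectMatching k m h₀ h₁ (K * r) T) :
    HasPerfectMatching k n (f ∘ h₀) (f ∘ h₁) r T := by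
  have hK' : (K : ℝ) ≠ 0 := by positivity
  simpa [hK'] using (H.map f hf).smul (inv_nonneg.2 K.cast_nonneg)

end HasPerfectMatching

lemma card_hasPerfectMatching_le_pow_mul {k m n K : ℕ} (hK : 0 < K) (f : Fin m → Fin n)
    (hf : ∀ u, #{v | f v = u} = K) (r T : ℝ) :
    #{q : (Fin k → Fin m) × (Fin k → Fin m) | HasPerfectMatching k m q.1 q.2 (K * r) T} ≤
      K ^ (2 * k) *
        #{q : (Fin k → Fin n) × (Fin k → Fin n) | HasPerfectMatching k n q.1 q.2 r T} := by
  refine card_le_mul_card_image_of_maps_to (f := Prod.map (f ∘ ·) (f ∘ ·))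
    (fun q hq => ?_) _ fun g _ => ?_
  · simp only [mem_filter, mem_univ, true_and] at hq ⊢
    exact hq.merge hK f hf
  · calc #{q ∈ _ | Prod.map (f ∘ ·) (f ∘ ·) q = g}
        ≤ #(univ.filter (f ∘ · = g.1) ×ˢ univ.filter (f ∘ · = g.2)) := by
          refine card_le_card fun q => ?_
          simp [Prod.ext_iff]
      _ = K ^ (2 * k) := by
          simp only [card_product, card_fiber_comp _ f hf, Fintype.card_fin, two_mul, pow_add]

/-- If the `(α, γ, t)`-graph family is `(1−δ)`-feasible, then for every positive integer
`K` the `(Kα, γ, t)`-graph family is also `(1−δ)`-feasible (splitting each cache node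
into `K` virtual nodes of capacity `t/K` and coupling hash functions via
`h⁽¹⁾(j) = ⌊h⁽²⁾(j)/K⌋`). -/
theorem more_objects_feasible (α γ t δ ε : ℝ) (h : FamilyFeasible α γ t δ ε) :
    ∀ K : ℕ, 0 < K → FamilyFeasible ((K : ℝ) * α) γ t δ ε := by
  intro K hK
  obtain ⟨I, hI⟩ := h
  refine ⟨I, fun i hi => ?_⟩
  have hfine := hI (i * K) (hi.trans (Nat.le_mul_of_pos_right i hK))
  have hobjects : α * ((i * K : ℕ) : ℝ) = K * α * i := by push_cast; ring
  rw [hobjects] at hfine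
  set k := ⌊(K : ℝ) * α * i⌋₊
  have hrate : γ * (1 - ε) * ((i * K : ℕ) : ℝ) * t / k = K * (γ * (1 - ε) * i * t / k) := by
    push_cast; ring
  rw [hrate] at hfine
  have hcount := card_hasPerfectMatching_le_pow_mul (k := k) hK Fin.divNat (card_fiber_divNat i K)
    (γ * (1 - ε) * i * t / k) t
  have hKpow : (0 : ℝ) < (K : ℝ) ^ (2 * k) := by positivity
  refine le_of_mul_le_mul_left ?_ hKpow
  calc (K : ℝ) ^ (2 * k) * ((1 - δ) * (i : ℝ) ^ (2 * k))
      = (1 - δ) * ((i * K : ℕ) : ℝ) ^ (2 * k) := by push_cast; ring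
    _ ≤ _ := hfine
    _ ≤ _ := by exact_mod_cast hcount
end
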